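/- There are constants c_0, c_1 > 0 such that for all integers n, M, N with 1 ≤ n ≤ c_0·min(M,N), every randomized algorithm using n function values for computing the mean S_N on B_∞^N(L_∞^M) (with outputs in L_∞^M, error measured in the L_∞^M norm) has worst-case expected error at least c_1 · min( n^{−1/2}·(log(M+1))^{1/2}, 1 ) (logarithm to base 2). -/

import Mathlib

/-!
Split the `N` points into `L q ∈ (2n, 3n]` blocks of at least `m = ⌊N / (L q)⌋` points each,
indexed by `Fin L × Fin q` with `L ≈ log₂ M`, and choose coordinates of `ℝ^M` realising every
sign pattern on `Fin L`, so that the corresponding sign vectors `u_k` satisfy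
`‖∑ a_k u_k‖_∞ ≥ ∑ |a_k|`. The test inputs equal `±u_k` on the block `(k, r)`, with independent
random signs. A deterministic algorithm sees at most `n` blocks, so flipping the signs on the
unseen blocks (at least half of them) does not change its output but moves the mean by twice a
weighted Rademacher sum. By Khintchine's inequality (from the second and fourth moments) the
expected `ℓ_∞`-norm of that sum is at least of order
`(m / N) ∑_k √(#unseen blocks of direction k) ≳ √(L / n)`, and Bakhvalov's averaging over the
randomness of the algorithm turns this into the lower bound.
-/

noncomputable def linfNorm (M : ℕ) (x : Fin M → ℝ) : ℝ :=
  ⨆ i, |x i|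

open Finset

noncomputable def boolSign (x : Bool) : ℝ := if x then 1 else -1

@[simp] lemma boolSign_true : boolSign true = 1 := rfl

@[simp] lemma boolSign_false : boolSign false = -1 := rfl

@[simp] lemma boolSign_not (x : Bool) : boolSign (!x) = -boolSign x := by
  cases x <;> simp

@[simp] lemma abs_boolSign (x : Bool) : |boolSign x| = 1 := by
  cases x <;> simp

lemma boolSign_sq (x : Bool) : boolSign x ^ 2 = 1 := by
  cases x <;> norm_num

lemma mul_boolSign_decide_nonneg (a : ℝ) : a * boolSign (decide (0 ≤ a)) = |a| := by
  by_cases ha : 0 ≤ a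
  · simp [ha, abs_of_nonneg ha]
  · simp [ha, abs_of_neg (not_le.mp ha)]

section Rademacher

variable {B : Type*} [DecidableEq B]

def flipOn (U : Finset B) : Equiv.Perm (B → Bool) :=
  Function.Involutive.toPerm (fun ε b => if b ∈ U then !ε b else ε b) fun ε => by
    funext b; by_cases hb : b ∈ U <;> simp [hb]

lemma flipOn_apply (U : Finset B) (ε : B → Bool) (b : B) :
    flipOn U ε b = if b ∈ U then !ε b else ε b := rfl

lemma boolSign_flipOn (U : Finset B) (ε : B → Bool) (b : B) :
    boolSign (flipOn U ε b) = if b ∈ U then -boolSign (ε b) else boolSign (ε b) := by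
  rw [flipOn_apply]; split_ifs <;> simp

noncomputable def rademacherSum (V : Finset B) (w : B → ℝ) (ε : B → Bool) : ℝ :=
  ∑ b ∈ V, w b * boolSign (ε b)

lemma rademacherSum_flipOn {U V : Finset B} (hUV : Disjoint U V) (w : B → ℝ) (ε : B → Bool) :
    rademacherSum V w (flipOn U ε) = rademacherSum V w ε := by
  refine sum_congr rfl fun b hb => ?_
  rw [boolSign_flipOn, if_neg (disjoint_right.mp hUV hb)]

lemma rademacherSum_insert {V : Finset B} {a : B} (ha : a ∉ V) (w : B → ℝ) (ε : B → Bool) :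
    rademacherSum (insert a V) w ε = w a * boolSign (ε a) + rademacherSum V w ε :=
  sum_insert ha

variable [Fintype B]

/-- Flipping the `a`-th sign negates the summand. -/
lemma sum_mul_boolSign_eq_zero {g : (B → Bool) → ℝ} {a : B}
    (hg : ∀ ε, g (flipOn {a} ε) = g ε) : ∑ ε, g ε * boolSign (ε a) = 0 := by
  have h := Equiv.sum_comp (flipOn {a}) fun ε => g ε * boolSign (ε a)
  simp only [hg, boolSign_flipOn, mem_singleton, if_true, mul_neg, sum_neg_distrib] at h
  linarith

lemma sum_rademacherSum_pow_mul_boolSign {V : Finset B} {a : B} (ha : a ∉ V) (w : B → ℝ)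
    (k : ℕ) : ∑ ε, rademacherSum V w ε ^ k * boolSign (ε a) = 0 :=
  sum_mul_boolSign_eq_zero fun ε => by
    rw [rademacherSum_flipOn (disjoint_singleton_left.mpr ha)]

lemma sum_rademacherSum_sq (V : Finset B) (w : B → ℝ) :
    ∑ ε, rademacherSum V w ε ^ 2 = (∑ b ∈ V, w b ^ 2) * Fintype.card (B → Bool) := by
  induction V using Finset.induction_on with
  | empty => simp [rademacherSum]
  | insert a V ha ih =>
    have expand : ∀ ε, rademacherSum (insert a V) w ε ^ 2 = (w a ^ 2 + rademacherSum V w ε ^ 2)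
        + 2 * w a * (rademacherSum V w ε ^ 1 * boolSign (ε a)) := fun ε => by
      rw [rademacherSum_insert ha]
      linear_combination w a ^ 2 * boolSign_sq (ε a)
    simp only [expand, sum_add_distrib, ← mul_sum, sum_rademacherSum_pow_mul_boolSign ha, ih,
      sum_insert ha, sum_const, card_univ, nsmul_eq_mul, mul_zero, add_zero]
    ring

lemma sum_rademacherSum_pow_four_le (V : Finset B) (w : B → ℝ) :
    ∑ ε, rademacherSum V w ε ^ 4 ≤ 3 * (∑ b ∈ V, w b ^ 2) ^ 2 * Fintype.card (B → Bool) := by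
  induction V using Finset.induction_on with
  | empty => simp [rademacherSum]
  | insert a V ha ih =>
    have expand : ∀ ε, rademacherSum (insert a V) w ε ^ 4
        = (w a ^ 4 + 6 * w a ^ 2 * rademacherSum V w ε ^ 2 + rademacherSum V w ε ^ 4)
          + 4 * w a ^ 3 * (rademacherSum V w ε ^ 1 * boolSign (ε a))
          + 4 * w a * (rademacherSum V w ε ^ 3 * boolSign (ε a)) := fun ε => by
      rw [rademacherSum_insert ha]
      linear_combination (w a ^ 4 * (boolSign (ε a) ^ 2 + 1) + 6 * w a ^ 2 * rademacherSum V w ε ^ 2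
        + 4 * w a ^ 3 * rademacherSum V w ε * boolSign (ε a)) * boolSign_sq (ε a)
    simp only [expand, sum_add_distrib, ← mul_sum, sum_rademacherSum_pow_mul_boolSign ha,
      sum_rademacherSum_sq, sum_insert ha, sum_const, card_univ, nsmul_eq_mul, mul_zero, add_zero]
    have hκ : (0 : ℝ) ≤ Fintype.card (B → Bool) := Nat.cast_nonneg _
    nlinarith [mul_nonneg hκ (sq_nonneg (w a ^ 2))]

end Rademacher

lemma sum_sq_pow_three_le {ι : Type*} (s : Finset ι) (f : ι → ℝ) :
    (∑ i ∈ s, f i ^ 2) ^ 3 ≤ (∑ i ∈ s, |f i|) ^ 2 * ∑ i ∈ s, f i ^ 4 := by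
  set A₁ := ∑ i ∈ s, |f i|
  set A₂ := ∑ i ∈ s, f i ^ 2
  set A₃ := ∑ i ∈ s, |f i| ^ 3
  set A₄ := ∑ i ∈ s, f i ^ 4
  have h₁ : A₂ ^ 2 ≤ A₁ * A₃ :=
    sum_sq_le_sum_mul_sum_of_sq_le_mul s (fun i _ => abs_nonneg _) (fun i _ => by positivity)
      fun i _ => le_of_eq <| by rw [← sq_abs (f i)]; ring
  have h₃ : A₃ ^ 2 ≤ A₂ * A₄ :=
    sum_sq_le_sum_mul_sum_of_sq_le_mul s (fun i _ => sq_nonneg _) (fun i _ => by positivity)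
      fun i _ => le_of_eq <| by
        calc (|f i| ^ 3) ^ 2 = (|f i| ^ 2) ^ 3 := by ring
          _ = f i ^ 2 * f i ^ 4 := by rw [sq_abs]; ring
  have hA₂ : 0 ≤ A₂ := sum_nonneg fun i _ => sq_nonneg _
  rcases hA₂.eq_or_lt with h | h
  · rw [← h, zero_pow three_ne_zero]; positivity
  refine le_of_mul_le_mul_right ?_ h
  calc A₂ ^ 3 * A₂ = (A₂ ^ 2) ^ 2 := by ring
    _ ≤ (A₁ * A₃) ^ 2 := pow_le_pow_left₀ (sq_nonneg _) h₁ 2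
    _ = A₁ ^ 2 * A₃ ^ 2 := by ring
    _ ≤ A₁ ^ 2 * (A₂ * A₄) := mul_le_mul_of_nonneg_left h₃ (sq_nonneg _)
    _ = A₁ ^ 2 * A₄ * A₂ := by ring

theorem sqrt_sum_sq_mul_card_le_sum_abs_rademacherSum {B : Type*} [Fintype B] [DecidableEq B]
    (V : Finset B) (w : B → ℝ) :
    √(∑ b ∈ V, w b ^ 2) * Fintype.card (B → Bool)
      ≤ √3 * ∑ ε, |rademacherSum V w ε| := by
  set A := ∑ b ∈ V, w b ^ 2
  set κ : ℝ := (Fintype.card (B → Bool) : ℝ)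
  set T := ∑ ε, |rademacherSum V w ε|
  have hκ : 0 < κ := by positivity
  have hA : 0 ≤ A := sum_nonneg fun b _ => sq_nonneg _
  have hT : 0 ≤ T := sum_nonneg fun ε _ => abs_nonneg _
  have moments : (A * κ) ^ 3 ≤ T ^ 2 * (3 * A ^ 2 * κ) := by
    rw [← sum_rademacherSum_sq]
    exact (sum_sq_pow_three_le _ _).trans
      (mul_le_mul_of_nonneg_left (sum_rademacherSum_pow_four_le V w) (sq_nonneg _))
  suffices A * κ ^ 2 ≤ 3 * T ^ 2 by
    rw [← Real.sqrt_sq hκ.le, ← Real.sqrt_sq hT, ← Real.sqrt_mul hA, ← Real.sqrt_mul (by norm_num)]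
    exact Real.sqrt_le_sqrt (by linarith)
  rcases hA.eq_or_lt with h | h
  · rw [← h, zero_mul]; positivity
  refine le_of_mul_le_mul_right ?_ (by positivity : 0 < A ^ 2 * κ)
  linarith

lemma linfNorm_eq_norm {M : ℕ} (x : Fin M → ℝ) : linfNorm M x = ‖x‖ := by
  refine le_antisymm (Real.iSup_le (fun i => ?_) (norm_nonneg _)) ?_
  · simpa using norm_le_pi_norm x i
  refine (pi_norm_le_iff_of_nonneg (Real.iSup_nonneg fun i => abs_nonneg _)).mpr fun i => ?_
  simpa using le_ciSup (f := fun i => |x i|) (Set.finite_range _).bddAbove i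

section SignVectors

variable {C D : Type*} [Fintype C]

noncomputable def signVector (σ : C → D → Bool) (k : D) : C → ℝ := fun i => boolSign (σ i k)

lemma norm_signVector_le_one (σ : C → D → Bool) (k : D) : ‖signVector σ k‖ ≤ 1 :=
  (pi_norm_le_iff_of_nonneg zero_le_one).mpr fun i => by simp [signVector]

/-- The sign vectors of a surjection `C → (D → Bool)` span an isometric copy of `ℓ₁(D)`
inside `ℓ_∞(C)`. -/
lemma sum_abs_le_norm_sum_smul_signVector [Fintype D] {σ : C → D → Bool}
    (hσ : Function.Surjective σ) (a : D → ℝ) : ∑ k, |a k| ≤ ‖∑ k, a k • signVector σ k‖ := by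
  obtain ⟨i, hi⟩ := hσ fun k => decide (0 ≤ a k)
  calc ∑ k, |a k| = (∑ k, a k • signVector σ k) i := by
        simp [signVector, hi, mul_boolSign_decide_nonneg]
    _ ≤ ‖∑ k, a k • signVector σ k‖ :=
        (le_abs_self _).trans (by simpa using norm_le_pi_norm (∑ k, a k • signVector σ k) i)

end SignVectors

lemma exists_card_fiber_ge {α β : Type*} [Fintype α] [Fintype β] [DecidableEq β] [Nonempty β]
    {m : ℕ} (h : Fintype.card β * m ≤ Fintype.card α) :
    ∃ g : α → β, ∀ b, m ≤ #{a | g a = b} := by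
  obtain ⟨e⟩ := Function.Embedding.nonempty_of_card_le (α := β × Fin m) (by simpa using h)
  refine ⟨Function.extend e Prod.fst fun _ => Classical.arbitrary β, fun b => ?_⟩
  have hinj : Set.InjOn (fun r : Fin m => e (b, r)) (univ : Finset (Fin m)) :=
    fun r _ r' _ hr => by simpa using e.injective hr
  simpa using card_le_card_of_injOn _ (fun r _ => by simp [e.injective.extend_apply]) hinj

lemma sum_comp_eq_sum_card_fiber_smul {α β E : Type*} [Fintype α] [Fintype β] [DecidableEq β]
    [AddCommMonoid E] (g : α → β) (f : β → E) : ∑ a, f (g a) = ∑ b, #{a | g a = b} • f b := by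
  rw [← sum_fiberwise' univ g f]
  simp

lemma div_sqrt_le_sqrt {a A : ℝ} (ha : 0 ≤ a) (h : a ≤ A) : a / √A ≤ √a := by
  nth_rewrite 1 [← Real.mul_self_sqrt ha]
  rw [mul_div_assoc]
  exact mul_le_of_le_one_right (Real.sqrt_nonneg a)
    (div_le_one_of_le₀ (Real.sqrt_le_sqrt h) (Real.sqrt_nonneg A))

theorem mul_card_div_sqrt_mul_card_le_sum_norm_signVector {B C D : Type*} [Fintype B]
    [DecidableEq B] [Fintype C] [Fintype D] [DecidableEq D] {σ : C → D → Bool} (hσ : Function.Surjective σ)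
    (dir : B → D) (U : Finset B) {q : ℕ} (hq : ∀ k, #{b ∈ U | dir b = k} ≤ q)
    {w : B → ℝ} {m : ℝ} (hm : 0 ≤ m) (hw : ∀ b, m ≤ w b) :
    m * #U / √q * Fintype.card (B → Bool)
      ≤ √3 * ∑ ε : B → Bool, ‖∑ b ∈ U, (w b * boolSign (ε b)) • signVector σ (dir b)‖ := by
  set κ : ℝ := (Fintype.card (B → Bool) : ℝ)
  have fiber_bound :
      ∀ k, m * #{b ∈ U | dir b = k} / √q ≤ √(∑ b ∈ U with dir b = k, w b ^ 2) := fun k => calc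
      m * #{b ∈ U | dir b = k} / √q = m * (#{b ∈ U | dir b = k} / √q) := mul_div_assoc ..
      _ ≤ m * √(#{b ∈ U | dir b = k} : ℝ) :=
        mul_le_mul_of_nonneg_left
          (div_sqrt_le_sqrt (Nat.cast_nonneg _) (by exact_mod_cast hq k)) hm
      _ = √(∑ b ∈ U with dir b = k, m ^ 2) := by
        rw [sum_const, nsmul_eq_mul, Real.sqrt_mul' _ (sq_nonneg m), Real.sqrt_sq hm, mul_comm]
      _ ≤ √(∑ b ∈ U with dir b = k, w b ^ 2) :=
        Real.sqrt_le_sqrt (sum_le_sum fun b _ => pow_le_pow_left₀ hm (hw b) 2)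
  have regroup : ∀ ε : B → Bool, ∑ b ∈ U, (w b * boolSign (ε b)) • signVector σ (dir b)
      = ∑ k, rademacherSum {b ∈ U | dir b = k} w ε • signVector σ k := fun ε => by
    simp only [rademacherSum, sum_smul]
    exact (sum_fiberwise_of_maps_to (fun b _ => mem_univ (dir b)) _).symm.trans
      (sum_congr rfl fun k _ => sum_congr rfl fun b hb => by rw [(mem_filter.mp hb).2])
  calc m * #U / √q * κ = ∑ k, m * #{b ∈ U | dir b = k} / √q * κ := by
        rw [← sum_mul, ← sum_div, ← mul_sum,
          card_eq_sum_card_fiberwise fun b _ => mem_univ (dir b), Nat.cast_sum]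
    _ ≤ ∑ k, √3 * ∑ ε, |rademacherSum {b ∈ U | dir b = k} w ε| :=
        sum_le_sum fun k _ => (mul_le_mul_of_nonneg_right (fiber_bound k) (by positivity)).trans
          (sqrt_sum_sq_mul_card_le_sum_abs_rademacherSum _ w)
    _ = √3 * ∑ ε, ∑ k, |rademacherSum {b ∈ U | dir b = k} w ε| := by
        rw [← mul_sum, sum_comm]
    _ ≤ √3 * ∑ ε : B → Bool, ‖∑ b ∈ U, (w b * boolSign (ε b)) • signVector σ (dir b)‖ :=
        mul_le_mul_of_nonneg_left (sum_le_sum fun ε _ => by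
          rw [regroup]; exact sum_abs_le_norm_sum_smul_signVector hσ _) (Real.sqrt_nonneg 3)

/-- Bakhvalov's averaging argument: if each deterministic algorithm `A ω` cannot distinguish `x`
from `τ ω x`, its errors at the two points add up to at least `‖S x - S (τ ω x)‖`. -/
theorem le_two_mul_card_mul_of_perm_indistinguishable {Ω α E : Type*} [Fintype Ω] [Fintype α]
    [SeminormedAddCommGroup E] {P : Ω → ℝ} (hP : ∀ ω, 0 ≤ P ω) (hP1 : ∑ ω, P ω = 1)
    (S : α → E) (A : Ω → α → E) (τ : Ω → Equiv.Perm α) (hτ : ∀ ω x, A ω (τ ω x) = A ω x)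
    {b c : ℝ} (hb : ∀ x, ∑ ω, P ω * ‖S x - A ω x‖ ≤ b)
    (hc : ∀ ω, c ≤ ∑ x, ‖S x - S (τ ω x)‖) :
    c ≤ 2 * Fintype.card α * b := by
  have per_omega : ∀ ω, c ≤ 2 * ∑ x, ‖S x - A ω x‖ := fun ω => calc
    c ≤ ∑ x, ‖S x - S (τ ω x)‖ := hc ω
    _ ≤ ∑ x, (‖S x - A ω x‖ + ‖S (τ ω x) - A ω (τ ω x)‖) := sum_le_sum fun x _ => by
        rw [hτ, norm_sub_rev (S (τ ω x))]; exact norm_sub_le_norm_sub_add_norm_sub _ _ _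
    _ = 2 * ∑ x, ‖S x - A ω x‖ := by
        rw [sum_add_distrib, Equiv.sum_comp (τ ω) fun x => ‖S x - A ω x‖]; ring
  calc c = ∑ ω, P ω * c := by rw [← sum_mul, hP1, one_mul]
    _ ≤ ∑ ω, P ω * (2 * ∑ x, ‖S x - A ω x‖) :=
        sum_le_sum fun ω _ => mul_le_mul_of_nonneg_left (per_omega ω) (hP ω)
    _ = 2 * ∑ x, ∑ ω, P ω * ‖S x - A ω x‖ := by
        simp only [mul_sum, sum_comm (s := univ (α := Ω))]; ring_nf
    _ ≤ 2 * ∑ _x : α, b := mul_le_mul_of_nonneg_left (sum_le_sum fun x _ => hb x) zero_le_two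
    _ = 2 * Fintype.card α * b := by rw [sum_const, card_univ, nsmul_eq_mul, mul_assoc]

section MeanLowerBound

variable {n M N L q : ℕ}

noncomputable def blockSignInput (σ : Fin M → Fin L → Bool) (blk : Fin N → Fin L × Fin q)
    (ε : Fin L × Fin q → Bool) (j : Fin N) : Fin M → ℝ :=
  boolSign (ε (blk j)) • signVector σ (blk j).1

lemma norm_blockSignInput_le_one (σ : Fin M → Fin L → Bool) (blk : Fin N → Fin L × Fin q)
    (ε : Fin L × Fin q → Bool) (j : Fin N) : ‖blockSignInput σ blk ε j‖ ≤ 1 := by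
  rw [blockSignInput, norm_smul, Real.norm_eq_abs, abs_boolSign, one_mul]
  exact norm_signVector_le_one σ _

lemma blockSignInput_flipOn_of_notMem (σ : Fin M → Fin L → Bool) (blk : Fin N → Fin L × Fin q)
    {U : Finset (Fin L × Fin q)} (ε : Fin L × Fin q → Bool) {j : Fin N} (hj : blk j ∉ U) :
    blockSignInput σ blk (flipOn U ε) j = blockSignInput σ blk ε j := by
  simp only [blockSignInput, flipOn_apply, if_neg hj]

lemma smul_sum_blockSignInput_sub_flipOn (σ : Fin M → Fin L → Bool)
    (blk : Fin N → Fin L × Fin q) (U : Finset (Fin L × Fin q)) (ε : Fin L × Fin q → Bool) :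
    (N : ℝ)⁻¹ • ∑ j, blockSignInput σ blk ε j
        - (N : ℝ)⁻¹ • ∑ j, blockSignInput σ blk (flipOn U ε) j
      = (2 / N : ℝ) • ∑ b ∈ U, ((#{j | blk j = b} : ℝ) * boolSign (ε b)) • signVector σ b.1 := by
  simp only [blockSignInput, ← smul_sub, ← sum_sub_distrib]
  rw [sum_comp_eq_sum_card_fiber_smul blk fun b =>
    boolSign (ε b) • signVector σ b.1 - boolSign (flipOn U ε b) • signVector σ b.1, smul_sum,
    smul_sum, ← sum_subset (subset_univ U) fun b _ hb => by rw [flipOn_apply, if_neg hb]; simp]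
  refine sum_congr rfl fun b hb => ?_
  rw [boolSign_flipOn, if_pos hb, neg_smul, sub_neg_eq_add, ← two_smul ℝ,
    ← Nat.cast_smul_eq_nsmul ℝ]
  simp only [smul_smul]
  ring_nf

theorem div_le_of_mean_error_le {σ : Fin M → Fin L → Bool} (hσ : Function.Surjective σ)
    {blk : Fin N → Fin L × Fin q} {m : ℕ} (hblk : ∀ b, m ≤ #{j | blk j = b})
    {Ω : Type*} [Fintype Ω] {P : Ω → ℝ} (hP : ∀ ω, 0 ≤ P ω) (hP1 : ∑ ω, P ω = 1)
    (t : Ω → Fin n → Fin N) (φ : Ω → (Fin n → Fin M → ℝ) → Fin M → ℝ) {b : ℝ}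
    (hb : ∀ f : Fin N → Fin M → ℝ, (∀ j, ‖f j‖ ≤ 1) →
      ∑ ω, P ω * ‖(N : ℝ)⁻¹ • ∑ j, f j - φ ω (fun l => f (t ω l))‖ ≤ b) :
    m * ((L * q : ℕ) - n : ℝ) / (N * √(3 * q)) ≤ b := by
  set F := blockSignInput σ blk
  set κ : ℝ := (Fintype.card (Fin L × Fin q → Bool) : ℝ)
  set c : ℝ := m * ((L * q : ℕ) - n : ℝ) / (N * √(3 * q))
  let U : Ω → Finset (Fin L × Fin q) := fun ω => (univ.image fun l => blk (t ω l))ᶜ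
  have card_U : ∀ ω, ((L * q : ℕ) - n : ℝ) ≤ #(U ω) := fun ω => by
    have := card_compl_add_card (univ.image fun l => blk (t ω l))
    have := card_image_le (s := (univ : Finset (Fin n))) (f := fun l => blk (t ω l))
    simp only [Fintype.card_prod, Fintype.card_fin, card_univ] at *
    have : L * q ≤ #(U ω) + n := by simp only [U]; omega
    rw [sub_le_iff_le_add]; exact_mod_cast this
  have gap : ∀ ω, 2 * κ * c
      ≤ ∑ ε, ‖(N : ℝ)⁻¹ • ∑ j, F ε j - (N : ℝ)⁻¹ • ∑ j, F (flipOn (U ω) ε) j‖ := by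
    intro ω
    have fiber_card : ∀ k, #{b ∈ U ω | b.1 = k} ≤ q := fun k =>
      (card_le_card_of_injOn Prod.snd (fun _ _ => mem_univ _) fun b hb b' hb' h =>
        Prod.ext (((mem_filter.mp hb).2).trans (mem_filter.mp hb').2.symm) h).trans_eq (card_fin q)
    have key := mul_card_div_sqrt_mul_card_le_sum_norm_signVector hσ Prod.fst (U ω)
      fiber_card (Nat.cast_nonneg m) (w := fun b => (#{j | blk j = b} : ℝ))
      fun b => by exact_mod_cast hblk b
    simp only [F, smul_sum_blockSignInput_sub_flipOn, norm_smul, ← mul_sum,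
      Real.norm_of_nonneg (by positivity : (0 : ℝ) ≤ 2 / N)]
    calc 2 * κ * c = 2 / N * (m * ((L * q : ℕ) - n : ℝ) / √q * κ / √3) := by
          simp only [c]; rw [Real.sqrt_mul (by norm_num)]; ring
      _ ≤ _ := by
          gcongr
          rw [div_le_iff₀ (by positivity), mul_comm _ √3]
          refine le_trans ?_ key
          gcongr
          exact card_U ω
  have := le_two_mul_card_mul_of_perm_indistinguishable hP hP1
    (fun ε => (N : ℝ)⁻¹ • ∑ j, F ε j) (fun ω ε => φ ω fun l => F ε (t ω l))
    (fun ω => flipOn (U ω)) (fun ω ε => by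
      simp only [F]
      congr 1; funext l
      exact blockSignInput_flipOn_of_notMem σ blk ε (by simp [U]))
    (fun ε => hb _ (norm_blockSignInput_le_one σ blk ε)) gap
  exact le_of_mul_le_mul_left this (by positivity)

end MeanLowerBound

lemma logb_two_add_one_le {M : ℕ} (hM : 2 ≤ M) : Real.logb 2 (M + 1) ≤ 2 * Nat.log 2 M := by
  have hpow : (M + 1 : ℝ) ≤ 2 ^ ((Nat.log 2 M + 1 : ℕ) : ℝ) := by
    rw [Real.rpow_natCast]; exact_mod_cast Nat.lt_pow_succ_log_self one_lt_two M
  have := (Real.logb_le_iff_le_rpow one_lt_two (by positivity)).mpr hpow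
  have : (1 : ℝ) ≤ Nat.log 2 M := by exact_mod_cast Nat.log_pos one_lt_two hM
  push_cast at *
  linarith

lemma min_rpow_le_sqrt {n M : ℕ} (hn : 1 ≤ n) (hM : 2 ≤ M) :
    min ((n : ℝ) ^ (-(1 / 2 : ℝ)) * Real.logb 2 (M + 1) ^ (1 / 2 : ℝ)) 1
      ≤ √2 * √((min (Nat.log 2 M) n : ℕ) / n : ℝ) := by
  have hn' : (0 : ℝ) < n := by exact_mod_cast hn
  rw [Real.rpow_neg hn'.le, ← Real.sqrt_eq_rpow, ← Real.sqrt_eq_rpow, inv_mul_eq_div,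
    ← Real.sqrt_div' _ hn'.le, ← Real.sqrt_mul zero_le_two]
  calc min √(Real.logb 2 (M + 1) / n) 1 = √(min (Real.logb 2 (M + 1) / n) 1) := by
        rw [Real.sqrt_monotone.map_min, Real.sqrt_one]
    _ ≤ √(min (2 * Nat.log 2 M / n) 2) := by
        gcongr
        · exact logb_two_add_one_le hM
        · norm_num
    _ = √(2 * ((min (Nat.log 2 M) n : ℕ) / n : ℝ)) := by
        rw [Nat.cast_min, ← min_div_div_right hn'.le, div_self hn'.ne',
          mul_min_of_nonneg _ _ zero_le_two, mul_div_assoc, mul_one]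

lemma sqrt_div_div_twelve_le {n N L q m : ℕ} (hn : 1 ≤ n) (hq_lower : 2 * n < L * q)
    (hq_upper : L * q ≤ 3 * n) (hm : N < 2 * m * (L * q)) (hN : 0 < N) :
    √(L / n : ℝ) / 12 ≤ m * ((L * q : ℕ) - n : ℝ) / (N * √(3 * q)) := by
  have hn' : (0 : ℝ) < n := by exact_mod_cast hn
  have hq_upper' : (L * q : ℝ) ≤ 3 * n := by exact_mod_cast hq_upper
  have hq_lower' : 2 * (n : ℝ) < L * q := by exact_mod_cast hq_lower
  have hm' : (N : ℝ) < 2 * m * (L * q) := by exact_mod_cast hm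
  have hN' : (0 : ℝ) < N := by exact_mod_cast hN
  have hq : (0 : ℝ) < q := by exact_mod_cast Nat.pos_of_ne_zero (by rintro rfl; omega)
  calc √(L / n : ℝ) / 12 ≤ 1 / 4 / √(3 * q) := by
        rw [div_le_div_iff₀ (by norm_num) (by positivity), ← Real.sqrt_mul (by positivity)]
        calc √(L / n * (3 * q) : ℝ) ≤ √(3 ^ 2) := Real.sqrt_le_sqrt <| by
              rw [div_mul_eq_mul_div, div_le_iff₀ hn']; linarith
          _ = 1 / 4 * 12 := by rw [Real.sqrt_sq (by norm_num)]; norm_num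
    _ ≤ m * ((L * q : ℕ) - n : ℝ) / N / √(3 * q) := by
        refine div_le_div_of_nonneg_right ?_ (Real.sqrt_nonneg _)
        rw [le_div_iff₀ hN']; push_cast; nlinarith
    _ = m * ((L * q : ℕ) - n : ℝ) / (N * √(3 * q)) := div_div _ _ _

theorem sqrt_div_div_twelve_le_of_mean_error_le {n M N : ℕ} (hn : 1 ≤ n) (hM : 3 * n ≤ M)
    (hN : 3 * n ≤ N) {Ω : Type*} [Fintype Ω] {P : Ω → ℝ} (hP : ∀ ω, 0 ≤ P ω)
    (hP1 : ∑ ω, P ω = 1) (t : Ω → Fin n → Fin N)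
    (φ : Ω → (Fin n → Fin M → ℝ) → Fin M → ℝ) {b : ℝ}
    (hb : ∀ f : Fin N → Fin M → ℝ, (∀ j, ‖f j‖ ≤ 1) →
      ∑ ω, P ω * ‖(N : ℝ)⁻¹ • ∑ j, f j - φ ω (fun l => f (t ω l))‖ ≤ b) :
    √((min (Nat.log 2 M) n : ℕ) / n : ℝ) / 12 ≤ b := by
  set L := min (Nat.log 2 M) n
  have hL : 0 < L := lt_min (Nat.log_pos one_lt_two (by omega)) hn
  set q := 2 * n / L + 1
  have hq_lower : 2 * n < L * q := by
    have := Nat.lt_div_mul_add (a := 2 * n) hL; simp only [q]; linarith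
  have hq_upper : L * q ≤ 3 * n := by
    have := Nat.mul_div_le (2 * n) L; have : L ≤ n := min_le_right _ _; simp only [q]; linarith
  set m := N / (L * q)
  have hm : N < 2 * m * (L * q) := by
    have := Nat.lt_div_mul_add (a := N) (b := L * q) (by omega)
    have : 0 < m := Nat.div_pos (by omega) (by omega)
    simp only [m] at *; nlinarith
  obtain ⟨σ, hσ⟩ : ∃ σ : Fin M → Fin L → Bool, Function.Surjective σ :=
    Function.exists_surjective_iff.mpr ⟨inferInstance, Function.Embedding.nonempty_of_card_le <| by
      simpa using (Nat.pow_le_pow_right two_pos (min_le_left _ _)).trans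
        (Nat.pow_log_le_self 2 (by omega : M ≠ 0))⟩
  have : NeZero L := ⟨hL.ne'⟩
  obtain ⟨blk, hblk⟩ := exists_card_fiber_ge (α := Fin N) (β := Fin L × Fin q) (m := m) <| by
    simpa [m, mul_comm] using Nat.div_mul_le_self N (L * q)
  exact (sqrt_div_div_twelve_le hn hq_lower hq_upper hm (by omega)).trans
    (div_le_of_mean_error_le hσ hblk hP hP1 t φ hb)

/-- There are constants `c₀, c₁ > 0` such that for all `n, M, N`
with `1 ≤ n ≤ c₀·min(M,N)`, every randomized algorithm using `n` function values for
computing the mean `S_N` on `B_∞^N(L_∞^M)` has worst-case expected error at least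
`c₁ · min(n^(−1/2)·(log₂(M+1))^(1/2), 1)`: any upper bound `b` for the expected
errors over the unit ball is at least that much. -/
theorem mean_linf_lower :
    ∃ c₀ c₁ : ℝ, 0 < c₀ ∧ 0 < c₁ ∧
      ∀ (n M N : ℕ), 1 ≤ n → (n : ℝ) ≤ c₀ * min (M : ℝ) (N : ℝ) →
        ∀ (Ω : Type) [Fintype Ω] (P : Ω → ℝ),
          (∀ ω, 0 ≤ P ω) → (∑ ω, P ω = 1) →
          ∀ (t : Ω → Fin n → Fin N)
            (φ : Ω → (Fin n → (Fin M → ℝ)) → (Fin M → ℝ)) (b : ℝ),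
            (∀ f : Fin N → Fin M → ℝ, (∀ j, linfNorm M (f j) ≤ 1) →
              ∑ ω, P ω *
                  linfNorm M
                    ((N : ℝ)⁻¹ • ∑ j, f j - φ ω (fun l => f (t ω l))) ≤ b) →
            c₁ * min ((n : ℝ) ^ (-(1 / 2 : ℝ)) *
                Real.logb 2 (M + 1) ^ (1 / 2 : ℝ)) 1 ≤ b := by
  refine ⟨1 / 3, 1 / 17, by norm_num, by norm_num, ?_⟩
  intro n M N hn hnMN Ω _ P hP hP1 t φ b hb
  simp only [linfNorm_eq_norm] at hb
  have h3n : 3 * (n : ℝ) ≤ min (M : ℝ) N := by linarith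
  have hM : 3 * n ≤ M := by exact_mod_cast h3n.trans (min_le_left _ _)
  have hN : 3 * n ≤ N := by exact_mod_cast h3n.trans (min_le_right _ _)
  have hsqrt2 : √2 ≤ 17 / 12 := Real.sqrt_le_iff.mpr ⟨by norm_num, by norm_num⟩
  calc 1 / 17 * min ((n : ℝ) ^ (-(1 / 2 : ℝ)) * Real.logb 2 (M + 1) ^ (1 / 2 : ℝ)) 1
      ≤ 1 / 17 * (√2 * √((min (Nat.log 2 M) n : ℕ) / n : ℝ)) := by
        gcongr; exact min_rpow_le_sqrt hn (by omega)
    _ ≤ √((min (Nat.log 2 M) n : ℕ) / n : ℝ) / 12 := by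
        nlinarith [Real.sqrt_nonneg ((min (Nat.log 2 M) n : ℕ) / n : ℝ)]
    _ ≤ b := sqrt_div_div_twelve_le_of_mean_error_le hn hM hN hP hP1 t φ hb
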